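/- Let U be an infinite subgroup of ℂ^× (for instance the S-unit group O_S^× of a number field, when it is infinite). For α, β ∈ ℂ^× set λ₁ = α, λ₂ = (1 − β)/α, λ₃ = (2 − λ₁ − λ₂)/(1 − λ₁λ₂) (note 1 − λ₁λ₂ = β ≠ 0), σ₁(α,β) = λ₁ + λ₂ + λ₃, and σ₂(α,β) = λ₁λ₂ + λ₁λ₃ + λ₂λ₃. Then the set {(σ₁(α,β), σ₂(α,β)) : α, β ∈ U} is Zariski-dense in ℂ²: no nonzero polynomial in ℂ[x,y] vanishes on it. -/

import Mathlib

noncomputable def fexpr (F : MvPolynomial (Fin 2) ℂ) (a b : ℂ) : ℂ :=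
  MvPolynomial.eval
    ![a + (1 - b) / a + (2 - a - (1 - b) / a) / (1 - a * ((1 - b) / a)),
      a * ((1 - b) / a) + a * ((2 - a - (1 - b) / a) / (1 - a * ((1 - b) / a)))
        + ((1 - b) / a) * ((2 - a - (1 - b) / a) / (1 - a * ((1 - b) / a)))] F


open MvPolynomial in
lemma one_var_aux (c : MvPolynomial (Fin 1) ℂ) (hc : c ≠ 0) (S : Set ℂ) (hS : S.Infinite) :
    ∃ b ∈ S, MvPolynomial.eval ![b] c ≠ 0 := by
  have hq : finSuccEquiv ℂ 0 c ≠ 0 := by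
    simpa using (map_ne_zero_iff _ (finSuccEquiv ℂ 0).injective).mpr hc
  have hinj : Function.Injective (MvPolynomial.eval (![] : Fin 0 → ℂ)) := by
    intro p q h
    obtain ⟨a, rfl⟩ := (MvPolynomial.C_surjective (Fin 0)) p
    obtain ⟨b, rfl⟩ := (MvPolynomial.C_surjective (Fin 0)) q
    simpa using h
  have hq' : (finSuccEquiv ℂ 0 c).map (MvPolynomial.eval (![] : Fin 0 → ℂ)) ≠ 0 := by
    intro h
    exact hq (Polynomial.map_injective _ hinj (by simpa using h))
  have hfin := Polynomial.finite_setOf_isRoot hq'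
  obtain ⟨b, hb⟩ := (hS.diff hfin).nonempty
  refine ⟨b, hb.1, ?_⟩
  have hv : (![b] : Fin 1 → ℂ) = Fin.cons b ![] := by
    funext i; fin_cases i; rfl
  rw [hv, MvPolynomial.eval_eq_eval_mv_eval']
  exact hb.2

open MvPolynomial in
lemma two_var_aux (p : MvPolynomial (Fin 2) ℂ) (hp : p ≠ 0) (S : Set ℂ) (hS : S.Infinite) :
    ∃ a ∈ S, ∃ b ∈ S, MvPolynomial.eval ![a, b] p ≠ 0 := by
  have hq : finSuccEquiv ℂ 1 p ≠ 0 := by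
    simpa using (map_ne_zero_iff _ (finSuccEquiv ℂ 1).injective).mpr hp
  obtain ⟨k, hk⟩ : ∃ k, (finSuccEquiv ℂ 1 p).coeff k ≠ 0 := by
    by_contra h
    push_neg at h
    exact hq (Polynomial.ext fun n => by simpa using h n)
  obtain ⟨b, hbS, hb⟩ := one_var_aux _ hk S hS
  have hq' : (finSuccEquiv ℂ 1 p).map (MvPolynomial.eval (![b] : Fin 1 → ℂ)) ≠ 0 := by
    intro h
    apply hb
    have := congrArg (fun r => Polynomial.coeff r k) h
    simpa [Polynomial.coeff_map] using this
  have hfin := Polynomial.finite_setOf_isRoot hq'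
  obtain ⟨a, ha⟩ := (hS.diff hfin).nonempty
  refine ⟨a, ha.1, b, hbS, ?_⟩
  have hv : (![a, b] : Fin 2 → ℂ) = Fin.cons a ![b] := by
    funext i; fin_cases i <;> rfl
  rw [hv, MvPolynomial.eval_eq_eval_mv_eval']
  exact ha.2

lemma cubic_root_exists (x y : ℂ) (hx : x ≠ 2) (hy : y - 2 * x + 3 ≠ 0) :
    ∃ t : ℂ, t ^ 3 - x * t ^ 2 + y * t - (x - 2) = 0 ∧ t ≠ 0 ∧ t ≠ x - 2 := by
  set q : Polynomial ℂ := Polynomial.C 1 * Polynomial.X ^ 3 + Polynomial.C (-x) * Polynomial.X ^ 2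
      + Polynomial.C y * Polynomial.X + Polynomial.C (-(x - 2)) with hqdef
  have hdeg : q.degree = 3 := Polynomial.degree_cubic one_ne_zero
  obtain ⟨t, ht⟩ := IsAlgClosed.exists_root q (by rw [hdeg]; decide)
  have hq : t ^ 3 - x * t ^ 2 + y * t - (x - 2) = 0 := by
    have := ht
    simp only [Polynomial.IsRoot, hqdef, Polynomial.eval_add, Polynomial.eval_mul,
      Polynomial.eval_pow, Polynomial.eval_C, Polynomial.eval_X] at this
    linear_combination this
  refine ⟨t, hq, ?_, ?_⟩
  · rintro rfl
    apply hx
    linear_combination -hq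
  · rintro rfl
    have h2 : (x - 2) * (y - 2 * x + 3) = 0 := by linear_combination hq
    rcases mul_eq_zero.mp h2 with h | h
    · exact hx (by linear_combination h)
    · exact hy h

lemma sigma_surj (x y : ℂ) (hx : x ≠ 2) (hy : y - 2 * x + 3 ≠ 0) :
    ∃ a b : ℂ, a ≠ 0 ∧ b ≠ 0 ∧
      ∀ F : MvPolynomial (Fin 2) ℂ, fexpr F a b = MvPolynomial.eval ![x, y] F := by
  obtain ⟨t, hq, ht0, htc⟩ := cubic_root_exists x y hx hy
  have h2xt : (2 : ℂ) - (x - t) ≠ 0 := by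
    intro h
    exact htc (by linear_combination h)
  set b : ℂ := (2 - (x - t)) / t with hbdef
  have hb0 : b ≠ 0 := div_ne_zero h2xt ht0
  have hbt : b * t = 2 - (x - t) := by rw [hbdef]; field_simp
  have hb1 : b ≠ 1 := by
    intro h
    apply hx
    rw [h] at hbt
    linear_combination hbt
  -- quadratic root
  set qa : Polynomial ℂ := Polynomial.C 1 * Polynomial.X ^ 2 + Polynomial.C (-(x - t)) * Polynomial.X
      + Polynomial.C (1 - b) with hqadef
  have hdeg : qa.degree = 2 := Polynomial.degree_quadratic one_ne_zero
  obtain ⟨a, haroot⟩ := IsAlgClosed.exists_root qa (by rw [hdeg]; decide)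
  have ha' : a ^ 2 - (x - t) * a + (1 - b) = 0 := by
    have := haroot
    simp only [Polynomial.IsRoot, hqadef, Polynomial.eval_add, Polynomial.eval_mul,
      Polynomial.eval_pow, Polynomial.eval_C, Polynomial.eval_X] at this
    linear_combination this
  have ha0 : a ≠ 0 := by
    rintro rfl
    apply hb1
    linear_combination -ha'
  refine ⟨a, b, ha0, hb0, ?_⟩
  intro F
  unfold fexpr
  have key : (1 : ℂ) - a * ((1 - b) / a) = b := by field_simp; ring
  have k1 : (1 - b) / a = (x - t) - a := by
    rw [div_eq_iff ha0]
    linear_combination ha'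
  rw [key, k1]
  have k3 : (2 - a - ((x - t) - a)) / b = t := by
    rw [div_eq_iff hb0]
    linear_combination -hbt
  rw [k3]
  have e1 : a + ((x - t) - a) + t = x := by ring
  have e2 : a * ((x - t) - a) + a * t + ((x - t) - a) * t = y := by
    apply mul_left_cancel₀ ht0
    linear_combination (-t) * ha' - hbt - hq
  rw [e1, e2]

lemma dominance (F : MvPolynomial (Fin 2) ℂ)
    (hcon : ∀ a b : ℂ, a ≠ 0 → b ≠ 0 → fexpr F a b = 0) : F = 0 := by
  have hzero : ∀ x y : ℂ, x ≠ 2 → y - 2 * x + 3 ≠ 0 → MvPolynomial.eval ![x, y] F = 0 := by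
    intro x y hx hy
    obtain ⟨a, b, ha0, hb0, hfe⟩ := sigma_surj x y hx hy
    rw [← hfe F]
    exact hcon a b ha0 hb0
  have hH : F * (MvPolynomial.X 0 - MvPolynomial.C 2)
      * (MvPolynomial.X 1 - MvPolynomial.C 2 * MvPolynomial.X 0 + MvPolynomial.C 3) = 0 := by
    apply MvPolynomial.funext
    intro v
    simp only [map_mul, map_sub, map_add, MvPolynomial.eval_X, MvPolynomial.eval_C, map_zero]
    by_cases hx : v 0 = 2
    · rw [hx]; ring
    by_cases hy : v 1 - 2 * v 0 + 3 = 0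
    · rw [hy, mul_zero]
    · have hz := hzero (v 0) (v 1) hx hy
      have hv : (![v 0, v 1] : Fin 2 → ℂ) = v := by funext i; fin_cases i <;> rfl
      rw [hv] at hz
      rw [hz]; ring
  have h2 : (MvPolynomial.X 0 - MvPolynomial.C 2 : MvPolynomial (Fin 2) ℂ) ≠ 0 := by
    intro h
    have := congrArg (MvPolynomial.eval ![0, 0]) h
    simp at this
  have h3 : (MvPolynomial.X 1 - MvPolynomial.C 2 * MvPolynomial.X 0 + MvPolynomial.C 3 :
      MvPolynomial (Fin 2) ℂ) ≠ 0 := by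
    intro h
    have := congrArg (MvPolynomial.eval ![0, 0]) h
    simp at this
  rcases mul_eq_zero.mp hH with h | h
  · rcases mul_eq_zero.mp h with h' | h'
    · exact h'
    · exact absurd h' h2
  · exact absurd h h3

noncomputable def N1 : MvPolynomial (Fin 2) ℂ :=
  (MvPolynomial.X 0) ^ 2 * MvPolynomial.X 1 + MvPolynomial.C 2 * MvPolynomial.X 1
    - (MvPolynomial.X 1) ^ 2 + MvPolynomial.C 2 * MvPolynomial.X 0 - (MvPolynomial.X 0) ^ 2 - 1

noncomputable def N2 : MvPolynomial (Fin 2) ℂ :=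
  (1 - MvPolynomial.X 1) * (MvPolynomial.X 0) ^ 2 * MvPolynomial.X 1
    + ((MvPolynomial.X 0) ^ 2 + 1 - MvPolynomial.X 1)
      * (MvPolynomial.C 2 * MvPolynomial.X 0 - (MvPolynomial.X 0) ^ 2 - 1 + MvPolynomial.X 1)

lemma N1_eval (a b : ℂ) : MvPolynomial.eval ![a, b] N1
    = a ^ 2 * b + 2 * b - b ^ 2 + 2 * a - a ^ 2 - 1 := by
  simp [N1]

lemma N2_eval (a b : ℂ) : MvPolynomial.eval ![a, b] N2
    = (1 - b) * a ^ 2 * b + (a ^ 2 + 1 - b) * (2 * a - a ^ 2 - 1 + b) := by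
  simp [N2]

noncomputable def pclear (F : MvPolynomial (Fin 2) ℂ) : MvPolynomial (Fin 2) ℂ :=
  ∑ m ∈ F.support, MvPolynomial.C (MvPolynomial.coeff m F) * N1 ^ (m 0) * N2 ^ (m 1)
    * (MvPolynomial.X 0) ^ (2 * F.totalDegree - (m 0 + 2 * m 1))
    * (MvPolynomial.X 1) ^ (F.totalDegree - (m 0 + m 1))

lemma fexpr_eq (F : MvPolynomial (Fin 2) ℂ) (a b : ℂ) (ha : a ≠ 0) (hb : b ≠ 0) :
    fexpr F a b = MvPolynomial.eval
      ![(a ^ 2 * b + 2 * b - b ^ 2 + 2 * a - a ^ 2 - 1) / (a * b),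
        ((1 - b) * a ^ 2 * b + (a ^ 2 + 1 - b) * (2 * a - a ^ 2 - 1 + b)) / (a ^ 2 * b)] F := by
  unfold fexpr
  have key : (1 : ℂ) - a * ((1 - b) / a) = b := by field_simp; ring
  rw [key]
  have h1 : a + (1 - b) / a + (2 - a - (1 - b) / a) / b
      = (a ^ 2 * b + 2 * b - b ^ 2 + 2 * a - a ^ 2 - 1) / (a * b) := by
    field_simp
    ring
  have h2 : a * ((1 - b) / a) + a * ((2 - a - (1 - b) / a) / b) + (1 - b) / a * ((2 - a - (1 - b) / a) / b)
      = ((1 - b) * a ^ 2 * b + (a ^ 2 + 1 - b) * (2 * a - a ^ 2 - 1 + b)) / (a ^ 2 * b) := by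
    field_simp
    ring
  rw [h1, h2]

lemma pclear_eval (F : MvPolynomial (Fin 2) ℂ) (a b : ℂ) (ha : a ≠ 0) (hb : b ≠ 0) :
    MvPolynomial.eval ![a, b] (pclear F)
      = a ^ (2 * F.totalDegree) * b ^ (F.totalDegree) * fexpr F a b := by
  rw [fexpr_eq F a b ha hb]
  rw [pclear, map_sum, MvPolynomial.eval_eq', Finset.mul_sum]
  apply Finset.sum_congr rfl
  intro m hm
  have hmd : m 0 + m 1 ≤ F.totalDegree := by
    have h1 := MvPolynomial.le_totalDegree hm
    rw [Finsupp.sum_fintype _ _ (fun _ => rfl)] at h1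
    simpa [Fin.sum_univ_two] using h1
  simp only [map_mul, map_pow, MvPolynomial.eval_C, MvPolynomial.eval_X, Matrix.cons_val_zero,
    Matrix.cons_val_one, Matrix.head_cons, Fin.prod_univ_two, N1_eval, N2_eval]
  have e1 : a ^ (2 * F.totalDegree)
      = a ^ (m 0 + 2 * m 1) * a ^ (2 * F.totalDegree - (m 0 + 2 * m 1)) := by
    rw [← pow_add]; congr 1; omega
  have e2 : b ^ (F.totalDegree)
      = b ^ (m 0 + m 1) * b ^ (F.totalDegree - (m 0 + m 1)) := by
    rw [← pow_add]; congr 1; omega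
  rw [e1, e2, div_pow, div_pow, mul_pow, mul_pow]
  field_simp
  ring

/-- Let `U` be an infinite subgroup of `ℂˣ`.  For `α, β ∈ U`, with
`λ₁ = α`, `λ₂ = (1 − β)/α`, `λ₃ = (2 − λ₁ − λ₂)/(1 − λ₁λ₂)`, the set of pairs
`(σ₁, σ₂) = (λ₁ + λ₂ + λ₃, λ₁λ₂ + λ₁λ₃ + λ₂λ₃)` is Zariski-dense in `ℂ²`:
no nonzero polynomial in `ℂ[x,y]` vanishes on it. -/
theorem zariski_dense_fpnf_sunits
    (U : Subgroup ℂˣ) (hU : (U : Set ℂˣ).Infinite)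
    (F : MvPolynomial (Fin 2) ℂ) (hF : F ≠ 0) :
    ∃ α β : ℂˣ, α ∈ U ∧ β ∈ U ∧
      MvPolynomial.eval
        ![(α : ℂ) + (1 - (β : ℂ)) / (α : ℂ)
            + (2 - (α : ℂ) - (1 - (β : ℂ)) / (α : ℂ))
              / (1 - (α : ℂ) * ((1 - (β : ℂ)) / (α : ℂ))),
          (α : ℂ) * ((1 - (β : ℂ)) / (α : ℂ))
            + (α : ℂ) * ((2 - (α : ℂ) - (1 - (β : ℂ)) / (α : ℂ))
              / (1 - (α : ℂ) * ((1 - (β : ℂ)) / (α : ℂ))))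
            + ((1 - (β : ℂ)) / (α : ℂ)) * ((2 - (α : ℂ) - (1 - (β : ℂ)) / (α : ℂ))
              / (1 - (α : ℂ) * ((1 - (β : ℂ)) / (α : ℂ))))] F ≠ 0 := by
  have hpne : pclear F ≠ 0 := by
    have hnot : ¬ (∀ a b : ℂ, a ≠ 0 → b ≠ 0 → fexpr F a b = 0) :=
      fun hcon => hF (dominance F hcon)
    push_neg at hnot
    obtain ⟨a, b, ha, hb, hfe⟩ := hnot
    intro hp0
    apply hfe
    have h := pclear_eval F a b ha hb
    rw [hp0, map_zero] at h
    have h2 := h.symm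
    rcases mul_eq_zero.mp h2 with h3 | h3
    · rcases mul_eq_zero.mp h3 with h4 | h4
      · exact absurd h4 (pow_ne_zero _ ha)
      · exact absurd h4 (pow_ne_zero _ hb)
    · exact h3
  have hS : Set.Infinite ((fun u : ℂˣ => (u : ℂ)) '' (U : Set ℂˣ)) :=
    hU.image (fun u _ v _ h => Units.ext h)
  obtain ⟨av, haS, bv, hbS, hev⟩ := two_var_aux (pclear F) hpne _ hS
  obtain ⟨α, hαU, rfl⟩ := haS
  obtain ⟨β, hβU, rfl⟩ := hbS
  refine ⟨α, β, hαU, hβU, ?_⟩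
  intro h0
  apply hev
  rw [pclear_eval F _ _ (Units.ne_zero α) (Units.ne_zero β)]
  rw [show fexpr F (α : ℂ) (β : ℂ) = 0 from h0, mul_zero]
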